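/- Let f, F be maps of open subsets of ℂ with F differentiable at z and f differentiable at F(z) (as real-differentiable maps ℂ → ℂ). If f satisfies ∂_z̄ f = μ̃₂ · conj(∂_z f) at F(z) and F satisfies ∂_z̄ F = μ₁ · ∂_z F at z, with |μ₁| < 1, |μ̃₂| ≤ 1, μ̃₂ real, then g = f ∘ F satisfies at z: ∂_z̄ g = ν₁ ∂_z g + ν₂ conj(∂_z g), where ν₁ = μ₁(1 − μ₂²)/(1 − |μ₁|²μ₂²), ν₂ = μ₂(1 − |μ₁|²)/(1 − |μ₁|²μ₂²), and μ₂ = μ̃₂ (evaluated at F(z)). -/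

import Mathlib

/-!
By the chain rule, with `w = ∂_z f(F z) · ∂_z F(z)` the two Beltrami equations give
`∂_z g = w + μ₂ conj(μ₁) conj(w)` and `∂_z̄ g = μ₁ w + μ₂ conj(w)`. Both sides of the claimed
equation are then `ℝ`-linear in `w` and `conj w`, and comparing coefficients reduces the claim to
the two scalar identities `ν₁ + μ₂ μ₁ ν₂ = μ₁` and `μ₂ conj(μ₁) ν₁ + ν₂ = μ₂`, valid as soon as
`1 - |μ₁|² μ₂² ≠ 0`.
-/

noncomputable def wirtingerD (h : ℂ → ℂ) (z : ℂ) : ℂ :=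
  (fderiv ℝ h z 1 - Complex.I * fderiv ℝ h z Complex.I) / 2

noncomputable def wirtingerDBar (h : ℂ → ℂ) (z : ℂ) : ℂ :=
  (fderiv ℝ h z 1 + Complex.I * fderiv ℝ h z Complex.I) / 2

open ComplexConjugate

theorem ContinuousLinearMap.apply_eq_mul_add_mul_conj (L : ℂ →L[ℝ] ℂ) (v : ℂ) :
    L v = (L 1 - Complex.I * L Complex.I) / 2 * v
        + (L 1 + Complex.I * L Complex.I) / 2 * conj v := by
  obtain ⟨x, y, rfl⟩ : ∃ x y : ℝ, v = x + y * Complex.I := ⟨v.re, v.im, (Complex.re_add_im v).symm⟩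
  have hx : L x = x * L 1 := by simpa using L.map_smul x 1
  have hy : L (y * Complex.I) = y * L Complex.I := by simpa using L.map_smul y Complex.I
  rw [map_add, hx, hy, map_add, map_mul, Complex.conj_ofReal, Complex.conj_ofReal, Complex.conj_I]
  linear_combination (y * L Complex.I) * Complex.I_mul_I

section ChainRule

variable {f F : ℂ → ℂ} {z : ℂ}

theorem wirtingerD_comp (hf : DifferentiableAt ℝ f (F z)) (hF : DifferentiableAt ℝ F z) :
    wirtingerD (f ∘ F) z =
      wirtingerD f (F z) * wirtingerD F z + wirtingerDBar f (F z) * conj (wirtingerDBar F z) := by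
  simp only [wirtingerD, wirtingerDBar, fderiv_comp z hf hF, ContinuousLinearMap.comp_apply]
  rw [(fderiv ℝ f (F z)).apply_eq_mul_add_mul_conj (fderiv ℝ F z 1),
    (fderiv ℝ f (F z)).apply_eq_mul_add_mul_conj (fderiv ℝ F z Complex.I)]
  simp only [map_div₀, map_add, map_mul, Complex.conj_I, map_ofNat]
  ring

theorem wirtingerDBar_comp (hf : DifferentiableAt ℝ f (F z)) (hF : DifferentiableAt ℝ F z) :
    wirtingerDBar (f ∘ F) z =
      wirtingerD f (F z) * wirtingerDBar F z + wirtingerDBar f (F z) * conj (wirtingerD F z) := by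
  simp only [wirtingerD, wirtingerDBar, fderiv_comp z hf hF, ContinuousLinearMap.comp_apply]
  rw [(fderiv ℝ f (F z)).apply_eq_mul_add_mul_conj (fderiv ℝ F z 1),
    (fderiv ℝ f (F z)).apply_eq_mul_add_mul_conj (fderiv ℝ F z Complex.I)]
  simp only [map_div₀, map_sub, map_mul, Complex.conj_I, map_ofNat]
  ring

end ChainRule

theorem one_sub_sq_mul_sq_pos {a b : ℝ} (ha : |a| < 1) (hb : |b| ≤ 1) : 0 < 1 - a ^ 2 * b ^ 2 := by
  have ha2 : a ^ 2 < 1 := by rw [← sq_abs]; nlinarith [abs_nonneg a]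
  have hb2 : b ^ 2 ≤ 1 := by rw [← sq_abs]; nlinarith [abs_nonneg b]
  nlinarith [sq_nonneg a, sq_nonneg b]

theorem mul_add_mul_conj_eq_of_ne_zero (μ1 w : ℂ) (μ2 : ℝ) (hD : 1 - ‖μ1‖ ^ 2 * μ2 ^ 2 ≠ 0) :
    μ1 * w + μ2 * conj w =
      μ1 * (((1 - μ2 ^ 2) / (1 - ‖μ1‖ ^ 2 * μ2 ^ 2) : ℝ) : ℂ) * (w + μ2 * conj μ1 * conj w)
      + (((μ2 * (1 - ‖μ1‖ ^ 2)) / (1 - ‖μ1‖ ^ 2 * μ2 ^ 2) : ℝ) : ℂ)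
        * conj (w + μ2 * conj μ1 * conj w) := by
  have hnorm : ((‖μ1‖ ^ 2 : ℝ) : ℂ) = μ1 * conj μ1 := by
    rw [Complex.sq_norm, Complex.mul_conj]
  have hD' : ((1 - ‖μ1‖ ^ 2 * μ2 ^ 2 : ℝ) : ℂ) ≠ 0 := by exact_mod_cast hD
  simp only [map_add, map_mul, Complex.conj_conj, Complex.conj_ofReal]
  rw [Complex.ofReal_div, Complex.ofReal_div, mul_div_assoc', div_mul_eq_mul_div, div_mul_eq_mul_div,
    ← add_div, eq_div_iff hD']
  push_cast [hnorm]
  ring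

theorem beltrami_composition_general (f F : ℂ → ℂ) (z : ℂ)
    (hF : DifferentiableAt ℝ F z) (hf : DifferentiableAt ℝ f (F z))
    (μ1 : ℂ) (μ2 : ℝ) (hμ1 : ‖μ1‖ < 1) (hμ2 : |μ2| ≤ 1)
    (hfEq : wirtingerDBar f (F z) = (μ2 : ℂ) * (starRingEnd ℂ) (wirtingerD f (F z)))
    (hFEq : wirtingerDBar F z = μ1 * wirtingerD F z)
    (ν1 ν2 : ℂ)
    (hν1 : ν1 = μ1 * (((1 - μ2 ^ 2) / (1 - ‖μ1‖ ^ 2 * μ2 ^ 2) : ℝ) : ℂ))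
    (hν2 : ν2 = (((μ2 * (1 - ‖μ1‖ ^ 2)) / (1 - ‖μ1‖ ^ 2 * μ2 ^ 2) : ℝ) : ℂ)) :
    wirtingerDBar (f ∘ F) z =
      ν1 * wirtingerD (f ∘ F) z + ν2 * (starRingEnd ℂ) (wirtingerD (f ∘ F) z) := by
  set w := wirtingerD f (F z) * wirtingerD F z
  have hD : 1 - ‖μ1‖ ^ 2 * μ2 ^ 2 ≠ 0 :=
    (one_sub_sq_mul_sq_pos (by rwa [abs_norm]) hμ2).ne'
  have hgz : wirtingerD (f ∘ F) z = w + μ2 * conj μ1 * conj w := by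
    rw [wirtingerD_comp hf hF, hfEq, hFEq, map_mul, map_mul]; ring
  have hgzbar : wirtingerDBar (f ∘ F) z = μ1 * w + μ2 * conj w := by
    rw [wirtingerDBar_comp hf hF, hfEq, hFEq, map_mul]; ring
  rw [hgz, hgzbar, hν1, hν2]
  exact mul_add_mul_conj_eq_of_ne_zero μ1 w μ2 hD

theorem beltrami_composition (f F : ℂ → ℂ) (z : ℂ)
    (hF : DifferentiableAt ℝ F z) (hf : DifferentiableAt ℝ f (F z))
    (μ1 : ℂ) (μ2 : ℝ) (hμ1 : ‖μ1‖ < 1) (hμ2 : |μ2| ≤ 1)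
    (hfEq : wirtingerDBar f (F z) = (μ2 : ℂ) * (starRingEnd ℂ) (wirtingerD f (F z)))
    (hFEq : wirtingerDBar F z = μ1 * wirtingerD F z)
    (hne : wirtingerD F z ≠ 0)
    (ν1 ν2 : ℂ)
    (hν1 : ν1 = μ1 * (((1 - μ2 ^ 2) / (1 - ‖μ1‖ ^ 2 * μ2 ^ 2) : ℝ) : ℂ))
    (hν2 : ν2 = (((μ2 * (1 - ‖μ1‖ ^ 2)) / (1 - ‖μ1‖ ^ 2 * μ2 ^ 2) : ℝ) : ℂ)) :
    wirtingerDBar (f ∘ F) z =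
      ν1 * wirtingerD (f ∘ F) z + ν2 * (starRingEnd ℂ) (wirtingerD (f ∘ F) z) :=
  beltrami_composition_general f F z hF hf μ1 μ2 hμ1 hμ2 hfEq hFEq ν1 ν2 hν1 hν2
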